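/- Let L_n = K[z₁^{±1},…,z_n^{±1}] be the Laurent polynomial algebra and L_n' := {(p₁,…,p_n) ∈ L_n^n : z_i ∂p_j/∂z_i = z_j ∂p_i/∂z_j for all i ≠ j}. Then L_n' is a K-subspace of L_n^n with K-basis consisting of the constant tuples together with the elements b_α = (λ_i z^α) for 0 ≠ α ∈ ℤ^n, where λ_i = 0 if α_i = 0, λ_i = 1 if i = min(Supp α), and λ_i = α_i/α_{min(Supp α)} if α_i ≠ 0; i.e., L_n' = K^n ⊕ ⊕_{0≠α∈ℤ^n} K b_α. -/

import Mathlib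

/-- The Laurent polynomial algebra `L_n = K[z₁^{±1},…,z_n^{±1}]`, modelled as finitely supported
functions on the monomial exponents `ℤ^n`. -/
abbrev Laur (K : Type*) [Field K] (n : ℕ) := (Fin n → ℤ) →₀ K

/-- The `K`-linear operator `z_i ∂/∂z_i` on `L_n`, acting on the monomial `z^α` by `α_i z^α`. -/
noncomputable def Dz (K : Type*) [Field K] (n : ℕ) (i : Fin n) : Laur K n →ₗ[K] Laur K n :=
  Finsupp.lsum K fun α => LinearMap.toSpanSingleton K (Laur K n) (Finsupp.single α ((α i : K)))

/-- `L_n' = {(p₁,…,p_n) : z_i ∂p_j/∂z_i = z_j ∂p_i/∂z_j for all i ≠ j}`, a `K`-subspace of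
`L_n^n`. -/
noncomputable def LaurC (K : Type*) [Field K] (n : ℕ) : Submodule K (Fin n → Laur K n) where
  carrier := {p | ∀ i j, i ≠ j → Dz K n i (p j) = Dz K n j (p i)}
  add_mem' := by
    intro p q hp hq i j hij
    simp only [Pi.add_apply, map_add, hp i j hij, hq i j hij]
  zero_mem' := by intro i j hij; simp
  smul_mem' := by
    intro c p hp i j hij
    simp only [Pi.smul_apply, map_smul, hp i j hij]

/-- The minimal element of the support of a nonzero `α ∈ ℤ^n`. -/
noncomputable def minSupp {n : ℕ} (α : Fin n → ℤ) (hα : α ≠ 0) : Fin n :=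
  (Finset.univ.filter fun i => α i ≠ 0).min' (by
    obtain ⟨i, hi⟩ := Function.ne_iff.mp hα
    exact ⟨i, by simpa using hi⟩)

/-- The element `b_α = (λ_i z^α)_{i} ∈ L_n^n`, where `λ_i = 0` if `α_i = 0`, `λ_i = 1` if
`i = min(Supp α)`, and `λ_i = α_i / α_{min(Supp α)}` otherwise. -/
noncomputable def bAlpha (K : Type*) [Field K] {n : ℕ} (α : Fin n → ℤ) (hα : α ≠ 0) :
    Fin n → Laur K n := fun i =>
  Finsupp.single α
    (if α i = 0 then 0 else if i = minSupp α hα then 1 else (α i : K) / (α (minSupp α hα) : K))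

/-!
Since `z_i ∂/∂z_i` multiplies the monomial `z^β` by `β_i`, a tuple `p` lies in `L_n'` iff for every
exponent `β` the coefficient vector `(p_j(β))_j` satisfies `β_i p_j(β) = β_j p_i(β)`: it is
arbitrary for `β = 0` and proportional to `β` otherwise. Hence the coordinates `p ↦ p_j(0)` and
`p ↦ p_{min Supp β}(β)` separate the points of `L_n'`, only finitely many of them are nonzero on a
given `p`, and they are dual to the family of constant tuples and the `b_β`; such a dual pair of
families is a basis (`Module.DualBases.basis`).
-/

section

variable {K : Type*} [Field K] {n : ℕ}

lemma Dz_single (i : Fin n) (α : Fin n → ℤ) (k : K) :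
    Dz K n i (Finsupp.single α k) = Finsupp.single α ((α i : K) * k) := by
  rw [Dz, Finsupp.lsum_single, LinearMap.toSpanSingleton_apply, Finsupp.smul_single, smul_eq_mul,
    mul_comm]

lemma Dz_apply (i : Fin n) (q : Laur K n) (β : Fin n → ℤ) :
    Dz K n i q β = (β i : K) * q β := by
  induction q using Finsupp.induction_linear with
  | zero => simp
  | add f g hf hg => simp [hf, hg, mul_add]
  | single α k =>
    rw [Dz_single, Finsupp.single_apply, Finsupp.single_apply]
    split_ifs with h <;> simp [h]

lemma minSupp_ne_zero {α : Fin n → ℤ} (hα : α ≠ 0) : α (minSupp α hα) ≠ 0 :=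
  (Finset.mem_filter.mp (Finset.min'_mem (Finset.univ.filter fun i => α i ≠ 0) _)).2

lemma bAlpha_eq [CharZero K] {α : Fin n → ℤ} (hα : α ≠ 0) (i : Fin n) :
    bAlpha K α hα i = Finsupp.single α ((α i : K) / α (minSupp α hα)) := by
  have hm : (α (minSupp α hα) : K) ≠ 0 := Int.cast_ne_zero.mpr (minSupp_ne_zero hα)
  rw [bAlpha]
  split_ifs with h0 hmin
  · simp [h0]
  · simp [hmin, hm]
  · rfl

end

namespace LaurC

variable {K : Type*} [Field K] {n : ℕ}

theorem mem_iff {p : Fin n → Laur K n} :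
    p ∈ LaurC K n ↔ ∀ i j β, (β i : K) * p j β = (β j : K) * p i β := by
  refine ⟨fun hp i j β => ?_, fun hp i j _ => Finsupp.ext fun β => ?_⟩
  · rcases eq_or_ne i j with rfl | hij
    · rfl
    · simpa only [Dz_apply] using DFunLike.congr_fun (hp i j hij) β
  · simpa only [Dz_apply] using hp i j β

lemma single_const_mem (i : Fin n) : Pi.single i (Finsupp.single 0 1) ∈ LaurC K n := by
  refine mem_iff.mpr fun j k β => ?_
  rcases eq_or_ne β 0 with rfl | hβ
  · simp
  · have hzero (l : Fin n) : (Pi.single i (Finsupp.single 0 1) : Fin n → Laur K n) l β = 0 := by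
      rcases eq_or_ne l i with rfl | hl
      · simp [Ne.symm hβ]
      · simp [hl]
    simp [hzero]

lemma bAlpha_mem [CharZero K] {α : Fin n → ℤ} (hα : α ≠ 0) : bAlpha K α hα ∈ LaurC K n := by
  refine mem_iff.mpr fun i j β => ?_
  simp only [bAlpha_eq, Finsupp.single_apply]
  split_ifs with h
  · subst h
    ring
  · simp

lemma apply_eq_div_mul_apply_minSupp [CharZero K] {p : Fin n → Laur K n} (hp : p ∈ LaurC K n)
    {β : Fin n → ℤ} (hβ : β ≠ 0) (j : Fin n) :
    p j β = (β j : K) / β (minSupp β hβ) * p (minSupp β hβ) β := by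
  have hm : (β (minSupp β hβ) : K) ≠ 0 := Int.cast_ne_zero.mpr (minSupp_ne_zero hβ)
  rw [div_mul_eq_mul_div, eq_div_iff hm, mul_comm]
  exact mem_iff.mp hp _ _ β

variable (K n) in
noncomputable def basisFun [CharZero K] : Fin n ⊕ {α : Fin n → ℤ // α ≠ 0} → LaurC K n :=
  Sum.elim (fun i => ⟨_, single_const_mem i⟩) (fun α => ⟨_, bAlpha_mem α.2⟩)

variable (K n) in
noncomputable def coord : Fin n ⊕ {α : Fin n → ℤ // α ≠ 0} → Module.Dual K (LaurC K n) :=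
  Sum.elim (fun j => Finsupp.lapply 0 ∘ₗ LinearMap.proj j ∘ₗ (LaurC K n).subtype)
    (fun α => Finsupp.lapply α.1 ∘ₗ LinearMap.proj (minSupp α.1 α.2) ∘ₗ (LaurC K n).subtype)

@[simp] lemma coord_inl (j : Fin n) (p : LaurC K n) :
    coord K n (.inl j) p = (p : Fin n → Laur K n) j 0 := rfl

@[simp] lemma coord_inr (α : {α : Fin n → ℤ // α ≠ 0}) (p : LaurC K n) :
    coord K n (.inr α) p = (p : Fin n → Laur K n) (minSupp α.1 α.2) α.1 := rfl

lemma coord_basisFun [CharZero K] (s t : Fin n ⊕ {α : Fin n → ℤ // α ≠ 0}) :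
    coord K n s (basisFun K n t) = if s = t then 1 else 0 := by
  rcases s with j | α <;> rcases t with i | β
  · rcases eq_or_ne j i with rfl | h
    · simp [basisFun]
    · simp [basisFun, h]
  · simp [basisFun, bAlpha, β.2.symm]
  · rcases eq_or_ne (minSupp α.1 α.2) i with h | h
    · simp [basisFun, h, α.2.symm]
    · simp [basisFun, h]
  · rcases eq_or_ne α β with rfl | h
    · simp [basisFun, bAlpha_eq, minSupp_ne_zero]
    · simp [basisFun, bAlpha, h, Subtype.val_injective.ne (Ne.symm h)]

lemma finite_setOf_coord_ne_zero (p : LaurC K n) : {s | coord K n s p ≠ 0}.Finite := by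
  have hsupp : {α : {α : Fin n → ℤ // α ≠ 0} | coord K n (.inr α) p ≠ 0}.Finite :=
    ((Set.finite_iUnion fun j => ((p : Fin n → Laur K n) j).support.finite_toSet).preimage
      Subtype.val_injective.injOn).subset fun α hα =>
        Set.mem_iUnion.mpr ⟨minSupp α.1 α.2, Finsupp.mem_support_iff.mpr hα⟩
  refine ((Set.finite_range Sum.inl).union (hsupp.image Sum.inr)).subset ?_
  rintro (j | α) hs
  · exact .inl ⟨j, rfl⟩
  · exact .inr ⟨α, hs, rfl⟩

lemma eq_of_coord_eq [CharZero K] {p q : LaurC K n} (h : ∀ s, coord K n s p = coord K n s q) :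
    p = q := by
  ext j β
  rcases eq_or_ne β 0 with rfl | hβ
  · exact h (.inl j)
  · rw [apply_eq_div_mul_apply_minSupp p.2 hβ, apply_eq_div_mul_apply_minSupp q.2 hβ]
    exact congrArg _ (h (.inr ⟨β, hβ⟩))

theorem dualBases [CharZero K] : Module.DualBases (basisFun K n) (coord K n) where
  eval_same s := by simp [coord_basisFun]
  eval_of_ne s t hst := by simp [coord_basisFun, hst]
  total := eq_of_coord_eq
  finite := finite_setOf_coord_ne_zero

end LaurC

/-- `L_n' = K^n ⊕ ⊕_{0≠α∈ℤ^n} K b_α`: the constant tuples together with the `b_α` form a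
`K`-basis of `L_n'`. -/
theorem LaurC_basis (K : Type*) [Field K] [CharZero K] (n : ℕ) :
    ∃ bas : Module.Basis ((Fin n) ⊕ {α : Fin n → ℤ // α ≠ 0}) K (LaurC K n),
      (∀ i : Fin n, ((bas (Sum.inl i) : Fin n → Laur K n)) =
        fun j => if j = i then Finsupp.single 0 1 else 0) ∧
      (∀ α : {α : Fin n → ℤ // α ≠ 0},
        ((bas (Sum.inr α) : Fin n → Laur K n)) = bAlpha K α.1 α.2) := by
  refine ⟨LaurC.dualBases.basis, fun i => ?_, fun α => ?_⟩ <;>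
    rw [Module.DualBases.coe_basis]
  · funext j
    exact Pi.single_apply i _ j
  · rfl
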